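/- arXiv:2407.02640 — 8 statements merged into one kernel-verified Lean document; each statement's English description precedes it below -/
import Mathlib

section
/- Let B ≥ 0 and b₁, …, b_m ≥ 0 with b₁ ≤ B. Define e_j = max(B - (b₁ + ⋯ + b_j), 0) and τ_j = max(b_{j+1} - e_j, 0) for j = 1, …, m-1. Then Σ_{j=1}^{m-1} τ_j = max((b₁ + ⋯ + b_m) - B, 0). -/
lemma helper_step (S B c : ℝ) (hc : 0 ≤ c) :
    max (S - B) 0 + max (c - max (B - S) 0) 0 = max (S + c - B) 0 := by
  rcases le_total B S with h | h
  · rw [max_eq_left (by linarith : (0:ℝ) ≤ S - B),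
      max_eq_right (by linarith : B - S ≤ (0:ℝ)), sub_zero,
      max_eq_left hc, max_eq_left (by linarith : (0:ℝ) ≤ S + c - B)]
    ring
  · rw [max_eq_right (by linarith : S - B ≤ (0:ℝ)),
      max_eq_left (by linarith : (0:ℝ) ≤ B - S), zero_add,
      show c - (B - S) = S + c - B by ring]

theorem stmt2 (m : ℕ) (hm : 1 ≤ m) (B : ℝ) (hB : 0 ≤ B) (b : ℕ → ℝ)
    (hb : ∀ j, 1 ≤ j → j ≤ m → 0 ≤ b j) (hb1 : b 1 ≤ B) :
    ∑ j ∈ Finset.Icc 1 (m - 1),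
        max (b (j + 1) - max (B - ∑ i ∈ Finset.Icc 1 j, b i) 0) 0
      = max ((∑ j ∈ Finset.Icc 1 m, b j) - B) 0 := by
  induction m with
  | zero => omega
  | succ n ih =>
    rcases Nat.eq_zero_or_pos n with rfl | hn
    · simp [max_eq_right (by linarith : b 1 - B ≤ 0)]
    · obtain ⟨k, rfl⟩ : ∃ k, n = k + 1 := ⟨n - 1, by omega⟩
      have hbn : ∀ j, 1 ≤ j → j ≤ k + 1 → 0 ≤ b j := fun j h1 h2 => hb j h1 (by omega)
      have IH := ih (by omega) hbn
      rw [show k + 1 + 1 - 1 = k + 1 from rfl,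
        Finset.sum_Icc_succ_top (by omega : 1 ≤ k + 1),
        Finset.sum_Icc_succ_top (by omega : 1 ≤ k + 2)]
      rw [show k + 1 - 1 = k from rfl] at IH
      rw [IH, helper_step _ _ _ (hb (k + 2) (by omega) (by omega))]
end

section
/- Let m ≥ 2, let b₁, …, b_m ≥ 0, B ≥ 0 and δ₁, …, δ_{m-1} > 0. Consider the set F of vectors (τ₁, …, τ_{m-1}) with τ_i ≥ 0, Σ_{j=1}^{i} τ_j ≤ Σ_{j=1}^{i} b_j, and Σ_{j=1}^{i} τ_j ≥ Σ_{j=1}^{i+1} b_j - B for all i ∈ {1, …, m-1}. If τ* ∈ F minimizes Σ_{j=1}^{m-1} δ_j τ_j over F, then Σ_{j=1}^{m-1} τ*_j = max(Σ_{j=1}^{m} b_j - B, 0). -/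
theorem stmt5 (m : ℕ) (hm : 2 ≤ m) (B : ℝ) (hB : 0 ≤ B)
    (b : ℕ → ℝ) (hb : ∀ j, 1 ≤ j → j ≤ m → 0 ≤ b j)
    (δ : ℕ → ℝ) (hδ : ∀ j, 1 ≤ j → j ≤ m - 1 → 0 < δ j)
    (F : Set (ℕ → ℝ))
    (hF : F = {τ | (∀ i, 1 ≤ i → i ≤ m - 1 → 0 ≤ τ i) ∧
        (∀ i, 1 ≤ i → i ≤ m - 1 →
          ∑ j ∈ Finset.Icc 1 i, τ j ≤ ∑ j ∈ Finset.Icc 1 i, b j) ∧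
        (∀ i, 1 ≤ i → i ≤ m - 1 →
          (∑ j ∈ Finset.Icc 1 (i + 1), b j) - B ≤ ∑ j ∈ Finset.Icc 1 i, τ j)})
    (τstar : ℕ → ℝ) (hmem : τstar ∈ F)
    (hopt : ∀ τ ∈ F, ∑ j ∈ Finset.Icc 1 (m - 1), δ j * τstar j
        ≤ ∑ j ∈ Finset.Icc 1 (m - 1), δ j * τ j) :
    ∑ j ∈ Finset.Icc 1 (m - 1), τstar j
      = max ((∑ j ∈ Finset.Icc 1 m, b j) - B) 0 := by
  subst hF
  obtain ⟨hpos, hub, hlb⟩ := hmem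
  set n := m - 1 with hn
  have hn1 : 1 ≤ n := by omega
  have hnm : n + 1 = m := by omega
  set T := ∑ j ∈ Finset.Icc 1 n, τstar j with hT
  have hTnn : 0 ≤ T := Finset.sum_nonneg fun j hj =>
    hpos j (Finset.mem_Icc.mp hj).1 (Finset.mem_Icc.mp hj).2
  have hlow : (∑ j ∈ Finset.Icc 1 m, b j) - B ≤ T := by
    have := hlb n hn1 le_rfl
    rwa [hnm] at this
  have hge : max ((∑ j ∈ Finset.Icc 1 m, b j) - B) 0 ≤ T := max_le hlow hTnn
  by_contra hne
  have hgt : max ((∑ j ∈ Finset.Icc 1 m, b j) - B) 0 < T := hge.lt_of_ne (Ne.symm hne)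
  have hT0 : 0 < T := lt_of_le_of_lt (le_max_right _ _) hgt
  have hslack : (∑ j ∈ Finset.Icc 1 m, b j) - B < T :=
    lt_of_le_of_lt (le_max_left _ _) hgt
  -- find largest index with positive τstar
  set K := (Finset.Icc 1 n).filter (fun j => 0 < τstar j) with hK
  have hKne : K.Nonempty := by
    obtain ⟨j, hj, hjpos⟩ := Finset.exists_lt_of_sum_lt (f := fun _ => (0:ℝ))
      (g := τstar) (by simpa using hT0)
    exact ⟨j, Finset.mem_filter.mpr ⟨hj, hjpos⟩⟩
  set k := K.max' hKne with hkdef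
  have hkK : k ∈ K := K.max'_mem hKne
  obtain ⟨hkIcc, hkpos⟩ := Finset.mem_filter.mp hkK
  obtain ⟨hk1, hkn⟩ := Finset.mem_Icc.mp hkIcc
  have htail : ∀ j, k < j → j ≤ n → τstar j = 0 := by
    intro j hkj hjn
    by_contra h0
    have hjpos : 0 < τstar j := lt_of_le_of_ne (hpos j (by omega) hjn) (Ne.symm h0)
    have : j ∈ K := Finset.mem_filter.mpr ⟨Finset.mem_Icc.mpr ⟨by omega, hjn⟩, hjpos⟩
    have := K.le_max' j this
    omega
  -- prefix sums equal T for i ≥ k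
  have hprefix : ∀ i, k ≤ i → i ≤ n → ∑ j ∈ Finset.Icc 1 i, τstar j = T := by
    intro i hki hin
    have hsplit : (∑ j ∈ Finset.Ioc 0 i, τstar j) + ∑ j ∈ Finset.Ioc i n, τstar j
        = ∑ j ∈ Finset.Ioc 0 n, τstar j :=
      Finset.sum_Ioc_consecutive _ (Nat.zero_le i) hin
    have hIcc : ∀ a : ℕ, Finset.Icc 1 a = Finset.Ioc 0 a := by
      intro a
      rw [show (1:ℕ) = 0 + 1 from rfl, Finset.Icc_add_one_left_eq_Ioc]
    have hzero : ∑ j ∈ Finset.Ioc i n, τstar j = 0 := by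
      apply Finset.sum_eq_zero
      intro j hj
      obtain ⟨hij, hjn⟩ := Finset.mem_Ioc.mp hj
      exact htail j (lt_of_le_of_lt hki hij) hjn
    rw [hIcc, hT, hIcc]
    linarith
  -- define perturbed point
  set ε := min (τstar k) (T - ((∑ j ∈ Finset.Icc 1 m, b j) - B)) with hε
  have hεpos : 0 < ε := lt_min hkpos (by linarith)
  have hεk : ε ≤ τstar k := min_le_left _ _
  have hεs : ε ≤ T - ((∑ j ∈ Finset.Icc 1 m, b j) - B) := min_le_right _ _
  set τ' := fun j => if j = k then τstar k - ε else τstar j with hτ'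
  have hsum' : ∀ i, k ≤ i →
      ∑ j ∈ Finset.Icc 1 i, τ' j = (∑ j ∈ Finset.Icc 1 i, τstar j) - ε := by
    intro i hki
    have hkmem : k ∈ Finset.Icc 1 i := Finset.mem_Icc.mpr ⟨hk1, hki⟩
    have h1 : ∑ j ∈ Finset.Icc 1 i, (τ' j - τstar j)
        = ∑ j ∈ Finset.Icc 1 i, (if j = k then -ε else 0) := by
      apply Finset.sum_congr rfl
      intro j _
      by_cases hjk : j = k <;> simp [hτ', hjk] <;> ring_nf
    rw [Finset.sum_sub_distrib] at h1
    rw [Finset.sum_ite_eq' (Finset.Icc 1 i) k (fun _ => -ε), if_pos hkmem] at h1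
    linarith
  have hsame : ∀ i, i < k → ∑ j ∈ Finset.Icc 1 i, τ' j = ∑ j ∈ Finset.Icc 1 i, τstar j := by
    intro i hik
    apply Finset.sum_congr rfl
    intro j hj
    have : j ≠ k := by
      have := (Finset.mem_Icc.mp hj).2; omega
    simp [hτ', this]
  have hmem' : τ' ∈ {τ : ℕ → ℝ | (∀ i, 1 ≤ i → i ≤ n → 0 ≤ τ i) ∧
        (∀ i, 1 ≤ i → i ≤ n →
          ∑ j ∈ Finset.Icc 1 i, τ j ≤ ∑ j ∈ Finset.Icc 1 i, b j) ∧
        (∀ i, 1 ≤ i → i ≤ n →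
          (∑ j ∈ Finset.Icc 1 (i + 1), b j) - B ≤ ∑ j ∈ Finset.Icc 1 i, τ j)} := by
    refine ⟨?_, ?_, ?_⟩
    · intro i hi1 hin
      by_cases hik : i = k
      · simp [hτ', hik]; linarith
      · simp only [hτ', if_neg hik]; exact hpos i hi1 hin
    · intro i hi1 hin
      by_cases hik : k ≤ i
      · rw [hsum' i hik]
        have := hub i hi1 hin
        linarith
      · rw [hsame i (by omega)]; exact hub i hi1 hin
    · intro i hi1 hin
      by_cases hik : k ≤ i
      · rw [hsum' i hik, hprefix i hik hin]
        have hsub : ∑ j ∈ Finset.Icc 1 (i+1), b j ≤ ∑ j ∈ Finset.Icc 1 m, b j := by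
          apply Finset.sum_le_sum_of_subset_of_nonneg
          · apply Finset.Icc_subset_Icc_right; omega
          · intro j hj _
            exact hb j (Finset.mem_Icc.mp hj).1 (Finset.mem_Icc.mp hj).2
        linarith
      · rw [hsame i (by omega)]; exact hlb i hi1 hin
  have hcost : ∑ j ∈ Finset.Icc 1 n, δ j * τ' j
      = (∑ j ∈ Finset.Icc 1 n, δ j * τstar j) - δ k * ε := by
    have hkmem : k ∈ Finset.Icc 1 n := hkIcc
    have h1 : ∑ j ∈ Finset.Icc 1 n, (δ j * τ' j - δ j * τstar j)
        = ∑ j ∈ Finset.Icc 1 n, (if j = k then -(δ j * ε) else 0) := by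
      apply Finset.sum_congr rfl
      intro j _
      by_cases hjk : j = k <;> simp [hτ', hjk] <;> ring_nf
    rw [Finset.sum_sub_distrib] at h1
    rw [Finset.sum_ite_eq' (Finset.Icc 1 n) k (fun j => -(δ j * ε)), if_pos hkmem] at h1
    linarith
  have := hopt τ' hmem'
  rw [hcost] at this
  have hδk : 0 < δ k := hδ k hk1 hkn
  nlinarith
end

section
/- Let 0 < δ₁ < δ₂ < ⋯ < δ_f and let 0 = z₀ ≤ z₁ ≤ ⋯ ≤ z_{f-1} be real numbers. Define g(τ; z) = Σ_{d=1}^{f-1} δ_d · min(z_d - z_{d-1}, max(τ - z_{d-1}, 0)) + δ_f · max(τ - z_{f-1}, 0). If z¹ and z² are two such parameter vectors with z¹_d ≥ z²_d for all d ∈ {1, …, f-1}, then g(τ; z¹) ≤ g(τ; z²) for every τ ≥ 0. -/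
private lemma maxsub (τ a : ℝ) : max (τ - a) 0 = τ - min τ a := by
  rcases le_total τ a with h | h
  · rw [min_eq_left h, max_eq_right (by linarith)]; ring
  · rw [min_eq_right h, max_eq_left (by linarith)]

private lemma minsub (τ a b : ℝ) (hab : a ≤ b) :
    min (b - a) (max (τ - a) 0) = min τ b - min τ a := by
  rcases le_total τ a with h1 | h1
  · rw [min_eq_left h1, min_eq_left (h1.trans hab),
      max_eq_right (by linarith), min_eq_right (by linarith)]; ring
  · rw [min_eq_right h1, max_eq_left (by linarith)]
    rcases le_total τ b with h2 | h2
    · rw [min_eq_left h2, min_eq_right (by linarith)]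
    · rw [min_eq_right h2, min_eq_left (by linarith)]

private lemma key (δ z : ℕ → ℝ) (τ : ℝ) (hτ : 0 ≤ τ) (hz0 : z 0 = 0) :
    ∀ n : ℕ, (∀ d, 1 ≤ d → d ≤ n → z (d - 1) ≤ z d) →
    (∑ d ∈ Finset.Icc 1 n, δ d * min (z d - z (d - 1)) (max (τ - z (d - 1)) 0))
      + δ (n + 1) * max (τ - z n) 0
    = δ (n + 1) * τ - ∑ d ∈ Finset.Icc 1 n, (δ (d + 1) - δ d) * min τ (z d) := by
  intro n
  induction n with
  | zero =>
    intro _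
    simp [hz0, max_eq_left hτ]
  | succ n ih =>
    intro hz
    have hzn : z n ≤ z (n + 1) := by
      have := hz (n + 1) (by omega) (le_refl _)
      simpa using this
    have ih' := ih (fun d h1 h2 => hz d h1 (by omega))
    rw [Finset.sum_Icc_succ_top (by omega), Finset.sum_Icc_succ_top (by omega)]
    have e1 : min (z (n + 1) - z (n + 1 - 1)) (max (τ - z (n + 1 - 1)) 0)
        = min τ (z (n + 1)) - min τ (z n) := by
      simpa using minsub τ (z n) (z (n + 1)) hzn
    rw [e1, maxsub τ (z (n + 1))]
    have e2 : max (τ - z n) 0 = τ - min τ (z n) := maxsub τ (z n)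
    rw [e2] at ih'
    linarith [ih']

theorem stmt6 (f : ℕ) (hf : 1 ≤ f) (δ : ℕ → ℝ) (hδ1 : 0 < δ 1)
    (hδ : ∀ d, 1 ≤ d → d < f → δ d < δ (d + 1))
    (z1 z2 : ℕ → ℝ) (hz10 : z1 0 = 0) (hz20 : z2 0 = 0)
    (hz1mono : ∀ d, 1 ≤ d → d ≤ f - 1 → z1 (d - 1) ≤ z1 d)
    (hz2mono : ∀ d, 1 ≤ d → d ≤ f - 1 → z2 (d - 1) ≤ z2 d)
    (hge : ∀ d, 1 ≤ d → d ≤ f - 1 → z2 d ≤ z1 d)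
    (τ : ℝ) (hτ : 0 ≤ τ) :
    (∑ d ∈ Finset.Icc 1 (f - 1),
          δ d * min (z1 d - z1 (d - 1)) (max (τ - z1 (d - 1)) 0))
        + δ f * max (τ - z1 (f - 1)) 0
      ≤ (∑ d ∈ Finset.Icc 1 (f - 1),
          δ d * min (z2 d - z2 (d - 1)) (max (τ - z2 (d - 1)) 0))
        + δ f * max (τ - z2 (f - 1)) 0 := by
  have hfn : f - 1 + 1 = f := Nat.sub_add_cancel hf
  have h1 := key δ z1 τ hτ hz10 (f - 1) hz1mono
  have h2 := key δ z2 τ hτ hz20 (f - 1) hz2mono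
  rw [hfn] at h1 h2
  rw [h1, h2]
  have hsum : ∑ d ∈ Finset.Icc 1 (f - 1), (δ (d + 1) - δ d) * min τ (z2 d)
      ≤ ∑ d ∈ Finset.Icc 1 (f - 1), (δ (d + 1) - δ d) * min τ (z1 d) := by
    apply Finset.sum_le_sum
    intro d hd
    rw [Finset.mem_Icc] at hd
    have hdf : d < f := by omega
    have hδd : 0 ≤ δ (d + 1) - δ d := le_of_lt (by linarith [hδ d hd.1 hdf])
    exact mul_le_mul_of_nonneg_left
      (min_le_min (le_refl τ) (hge d hd.1 hd.2)) hδd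
  linarith
end

section
/- Let V be a type, N : V → Set V, and n₀, …, n_m, n_{m+1} a sequence in V. Define the forward ng-set of U = (n₀, …, n_m) as Π(U) = { n_r : r ∈ {0,…,m-1}, n_r ∈ ⋂_{ρ=r+1}^{m} N(n_ρ) } ∪ {n_m}. Then the extended sequence (n₀, …, n_{m+1}) is ng-feasible with respect to N if and only if (n₀, …, n_m) is ng-feasible with respect to N and n_{m+1} ∉ Π(U). -/
/-- ng-feasibility of the sequence `n 0, …, n m`. -/
def NgFeasible {V : Type*} (N : V → Set V) (n : ℕ → V) (m : ℕ) : Prop :=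
  ∀ j k, j < k → k ≤ m → n j = n k → ∃ ℓ, j < ℓ ∧ ℓ < k ∧ n j ∉ N (n ℓ)

/-- Forward ng-set of the sequence `n 0, …, n m`. -/
def FwdNgSet {V : Type*} (N : V → Set V) (n : ℕ → V) (m : ℕ) : Set V :=
  {x | (∃ r, r < m ∧ x = n r ∧ ∀ ρ, r < ρ → ρ ≤ m → n r ∈ N (n ρ)) ∨ x = n m}

theorem stmt10 {V : Type*} (N : V → Set V) (n : ℕ → V) (m : ℕ) :
    NgFeasible N n (m + 1) ↔ NgFeasible N n m ∧ n (m + 1) ∉ FwdNgSet N n m := by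
  constructor
  · intro h
    refine ⟨fun j k hjk hk he => h j k hjk (by omega) he, ?_⟩
    rintro (⟨r, hr, he, hall⟩ | he)
    · obtain ⟨ℓ, h1, h2, h3⟩ := h r (m+1) (by omega) le_rfl he.symm
      exact h3 (hall ℓ h1 (by omega))
    · obtain ⟨ℓ, h1, h2, _⟩ := h m (m+1) (by omega) le_rfl he.symm
      omega
  · rintro ⟨hf, hns⟩ j k hjk hk he
    rcases Nat.lt_or_ge k (m+1) with hk' | hk'
    · exact hf j k hjk (by omega) he
    · have hk'' : k = m + 1 := by omega
      subst hk''
      rcases Nat.lt_or_ge j m with hj | hj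
      · by_contra hcon
        push_neg at hcon
        exact hns (Or.inl ⟨j, hj, he.symm, fun ρ h1 h2 => hcon ρ h1 (by omega)⟩)
      · have : j = m := by omega
        subst this
        exact absurd (Or.inr he.symm) hns
end

section
/- Let V be a type, N : V → Set V, and let σ = (n₀, …, n_m) and s = (n_m, …, n_M) be two sequences sharing the node n_m, each ng-feasible with respect to N. Define Π(σ) = { n_r : r ≤ m-1, n_r ∈ ⋂_{ρ=r+1}^{m} N(n_ρ) } ∪ {n_m} and Π⁻¹(s) = {n_m} ∪ { n_r : m+1 ≤ r ≤ M, n_r ∈ ⋂_{ρ=m}^{r-1} N(n_ρ) }. Then the concatenated sequence (n₀, …, n_M) is ng-feasible with respect to N if and only if Π(σ) ∩ Π⁻¹(s) ⊆ {n_m}. -/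
/-- ng-feasibility of the window `n a, …, n b` of a sequence. -/
def NgFeasibleOn {V : Type*} (N : V → Set V) (n : ℕ → V) (a b : ℕ) : Prop :=
  ∀ j k, a ≤ j → j < k → k ≤ b → n j = n k → ∃ ℓ, j < ℓ ∧ ℓ < k ∧ n j ∉ N (n ℓ)

/-- Backward ng-set of the window `n a, …, n b`. -/
def BwdNgSetOn {V : Type*} (N : V → Set V) (n : ℕ → V) (a b : ℕ) : Set V :=
  {x | x = n a ∨ ∃ r, a + 1 ≤ r ∧ r ≤ b ∧ x = n r ∧ ∀ ρ, a ≤ ρ → ρ < r → n r ∈ N (n ρ)}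

theorem stmt12 {V : Type*} (N : V → Set V) (n : ℕ → V) (m M : ℕ) (hmM : m ≤ M)
    (hσ : NgFeasibleOn N n 0 m) (hs : NgFeasibleOn N n m M) :
    NgFeasibleOn N n 0 M ↔ FwdNgSet N n m ∩ BwdNgSetOn N n m M ⊆ {n m} := by
  constructor
  · intro h x ⟨hf, hb⟩
    rcases hf with ⟨r, hrm, hx, hfwd⟩ | hx
    · rcases hb with hx' | ⟨r', h1, h2, hx', hbwd⟩
      · exact Set.mem_singleton_iff.mpr hx'
      · exfalso
        have heq : n r = n r' := hx ▸ hx'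
        have hrr' : r < r' := lt_of_lt_of_le hrm (le_of_lt h1)
        obtain ⟨ℓ, hℓ1, hℓ2, hℓ3⟩ := h r r' (Nat.zero_le _) hrr'
          (le_trans h2 (le_refl M)) heq
        rcases le_or_gt ℓ m with hcase | hcase
        · exact hℓ3 (hfwd ℓ hℓ1 hcase)
        · exact hℓ3 (heq ▸ hbwd ℓ (le_of_lt hcase) hℓ2)
    · exact Set.mem_singleton_iff.mpr hx
  · intro hsub j k hj hjk hk heq
    rcases le_or_gt k m with hkm | hkm
    · exact hσ j k hj hjk hkm heq
    rcases le_or_gt m j with hmj | hmj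
    · exact hs j k hmj hjk hk heq
    -- j < m < k
    by_contra hno
    push_neg at hno
    have hmem : n j ∈ FwdNgSet N n m ∩ BwdNgSetOn N n m M := by
      constructor
      · left
        exact ⟨j, hmj, rfl, fun ρ h1 h2 => hno ρ h1 (lt_of_le_of_lt h2 hkm)⟩
      · right
        refine ⟨k, hkm, hk, heq, fun ρ h1 h2 => ?_⟩
        exact heq ▸ hno ρ (lt_of_lt_of_le hmj h1) h2
    have hjm : n j = n m := hsub hmem
    obtain ⟨ℓ, hℓ1, hℓ2, hℓ3⟩ := hσ j m (Nat.zero_le _) hmj (le_refl m) hjm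
    exact hℓ3 (hno ℓ hℓ1 (lt_trans hℓ2 hkm))
end

section
/- Let V be a type, N : V → Set V, and let σ = (n₀, …, n_m), s = (n_m, …, n_M) be sequences with concatenation U = (n₀, …, n_M). With Π(·) the forward ng-set and Ω(s) = ⋂_{ρ=m}^{M} N(n_ρ) the ng-residue of s, we have Π(U) = Π(s) ∪ (Π(σ) ∩ Ω(s)). -/
/-- Forward ng-set of the window `n a, …, n b` of a sequence. -/
def FwdNgSetOn {V : Type*} (N : V → Set V) (n : ℕ → V) (a b : ℕ) : Set V :=
  {x | (∃ r, a ≤ r ∧ r < b ∧ x = n r ∧ ∀ ρ, r < ρ → ρ ≤ b → n r ∈ N (n ρ)) ∨ x = n b}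

/-- ng-residue of the window `n a, …, n b`: the intersection of all neighborhoods. -/
def NgResidueOn {V : Type*} (N : V → Set V) (n : ℕ → V) (a b : ℕ) : Set V :=
  {x | ∀ ρ, a ≤ ρ → ρ ≤ b → x ∈ N (n ρ)}

theorem stmt13 {V : Type*} (N : V → Set V) (n : ℕ → V) (m M : ℕ) (hmM : m ≤ M) :
    FwdNgSetOn N n 0 M
      = FwdNgSetOn N n m M ∪ (FwdNgSetOn N n 0 m ∩ NgResidueOn N n m M) := by
  ext x
  simp only [FwdNgSetOn, NgResidueOn, Set.mem_union, Set.mem_inter_iff, Set.mem_setOf_eq]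
  constructor
  · rintro (⟨r, -, hrM, rfl, h⟩ | rfl)
    · rcases le_or_gt m r with hmr | hrm
      · exact Or.inl (Or.inl ⟨r, hmr, hrM, rfl, h⟩)
      · exact Or.inr ⟨Or.inl ⟨r, Nat.zero_le r, hrm, rfl,
          fun ρ h1 h2 => h ρ h1 (h2.trans hmM)⟩,
          fun ρ h1 h2 => h ρ (lt_of_lt_of_le hrm h1) h2⟩
    · exact Or.inl (Or.inr rfl)
  · rintro ((⟨r, _, hrM, rfl, h⟩ | rfl) | ⟨(⟨r, -, hrm, rfl, h⟩ | rfl), hres⟩)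
    · exact Or.inl ⟨r, Nat.zero_le r, hrM, rfl, h⟩
    · exact Or.inr rfl
    · refine Or.inl ⟨r, Nat.zero_le r, hrm.trans_le hmM, rfl, fun ρ h1 h2 => ?_⟩
      rcases le_or_gt ρ m with hρm | hmρ
      · exact h ρ h1 hρm
      · exact hres ρ hmρ.le h2
    · rcases eq_or_lt_of_le hmM with rfl | hlt
      · exact Or.inr rfl
      · exact Or.inl ⟨m, Nat.zero_le m, hlt, rfl, fun ρ h1 h2 => hres ρ h1.le h2⟩
end

section
/- Let V be a type, S ⊆ M ⊆ V, w : V → ℝ, and let (n₀, …, n_m) be a sequence in V with n_m ∈ M. Let r be the smallest index such that n_j ∈ M for all j with r ≤ j ≤ m. Then Σ_{i=0}^{m} 1[n_i ∈ S] · (∏_{j=i+1}^{m} 1[n_j ∈ M]) · w(n_i) = Σ_{i=r}^{m} 1[n_i ∈ S] · w(n_i). -/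
open Classical

theorem stmt16 {V : Type*} (S M : Set V) (hSM : S ⊆ M) (w : V → ℝ)
    (n : ℕ → V) (m : ℕ) (hnm : n m ∈ M) (r : ℕ)
    (hr : ∀ j, r ≤ j → j ≤ m → n j ∈ M)
    (hrmin : ∀ r', r' < r → ¬ (∀ j, r' ≤ j → j ≤ m → n j ∈ M)) :
    ∑ i ∈ Finset.range (m + 1),
        (if n i ∈ S then (1 : ℝ) else 0)
          * (∏ j ∈ Finset.Icc (i + 1) m, (if n j ∈ M then (1 : ℝ) else 0))
          * w (n i)
      = ∑ i ∈ Finset.Icc r m, (if n i ∈ S then (1 : ℝ) else 0) * w (n i) := by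
  have hrm : r ≤ m := by
    by_contra h
    exact hrmin m (by omega) (fun j hj hj' => by
      have : j = m := le_antisymm hj' hj
      rw [this]; exact hnm)
  have key : ∀ i ∈ Finset.range (m + 1),
      (if n i ∈ S then (1 : ℝ) else 0)
        * (∏ j ∈ Finset.Icc (i + 1) m, (if n j ∈ M then (1 : ℝ) else 0))
        * w (n i)
      = if i ∈ Finset.Icc r m then (if n i ∈ S then (1 : ℝ) else 0) * w (n i) else 0 := by
    intro i hi
    simp only [Finset.mem_range] at hi
    by_cases hir : r ≤ i
    · have hprod : ∀ j ∈ Finset.Icc (i + 1) m, (if n j ∈ M then (1 : ℝ) else 0) = 1 := by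
        intro j hj
        simp only [Finset.mem_Icc] at hj
        exact if_pos (hr j (by omega) hj.2)
      rw [Finset.prod_congr rfl hprod, Finset.prod_const_one,
        if_pos (Finset.mem_Icc.mpr ⟨hir, by omega⟩)]
      ring
    · push_neg at hir
      have hic : i ∉ Finset.Icc r m := by
        simp only [Finset.mem_Icc, not_and, not_le]
        omega
      rw [if_neg hic]
      have := hrmin i hir
      push_neg at this
      obtain ⟨j, hj1, hj2, hj3⟩ := this
      rcases eq_or_lt_of_le hj1 with heq | hlt
      · have hnS : n i ∉ S := fun hS => hj3 (heq ▸ hSM hS)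
        rw [if_neg hnS]
        ring
      · have hz : (∏ k ∈ Finset.Icc (i + 1) m, (if n k ∈ M then (1 : ℝ) else 0)) = 0 :=
          Finset.prod_eq_zero (Finset.mem_Icc.mpr ⟨hlt, hj2⟩) (if_neg hj3)
        rw [hz]
        ring
  rw [Finset.sum_congr rfl key, Finset.sum_ite_mem,
    Finset.inter_eq_right.mpr (fun x hx => by
      simp only [Finset.mem_Icc] at hx
      exact Finset.mem_range.mpr (by omega))]
end

section
/- Let B ≥ 0 and b₁, …, b_m ≥ 0 with Σ_{i=1}^{m} b_i > B and b_i ≤ B for all i. Let δ₁, …, δ_{m-1} > 0 and let ℓ ∈ argmin{δ_i : 1 ≤ i ≤ m-1}. Then there exists (τ₁, …, τ_{m-1}) minimizing Σ δ_j τ_j over the set F = { τ ≥ 0 : Σ_{j=1}^{i+1} b_j - B ≤ Σ_{j=1}^{i} τ_j ≤ Σ_{j=1}^{i} b_j for all i } such that Σ_{j=1}^{ℓ-1} τ_j = max(Σ_{j=1}^{ℓ} b_j - B, 0) and Σ_{j=1}^{ℓ} τ_j = min(Σ_{j=1}^{ℓ} b_j, Σ_{j=1}^{m} b_j - B). -/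
private lemma lipMin {a b c : ℝ} (h : a ≤ b) : min b c - min a c ≤ b - a := by
  rcases min_cases b c with ⟨e1, l1⟩ | ⟨e1, l1⟩ <;>
    rcases min_cases a c with ⟨e2, l2⟩ | ⟨e2, l2⟩ <;> rw [e1, e2] <;> linarith

private lemma lipMax {a b c : ℝ} (h : a ≤ b) : max b c - max a c ≤ b - a := by
  rcases max_cases b c with ⟨e1, l1⟩ | ⟨e1, l1⟩ <;>
    rcases max_cases a c with ⟨e2, l2⟩ | ⟨e2, l2⟩ <;> rw [e1, e2] <;> linarith

theorem stmt19 (m : ℕ) (hm : 2 ≤ m) (B : ℝ) (hB : 0 ≤ B)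
    (b : ℕ → ℝ) (hb : ∀ i, 1 ≤ i → i ≤ m → 0 ≤ b i ∧ b i ≤ B)
    (hsum : B < ∑ j ∈ Finset.Icc 1 m, b j)
    (δ : ℕ → ℝ) (hδ : ∀ j, 1 ≤ j → j ≤ m - 1 → 0 < δ j)
    (ℓ : ℕ) (hℓmem : 1 ≤ ℓ ∧ ℓ ≤ m - 1)
    (hℓmin : ∀ i, 1 ≤ i → i ≤ m - 1 → δ ℓ ≤ δ i)
    (F : Set (ℕ → ℝ))
    (hF : F = {τ | (∀ i, 1 ≤ i → i ≤ m - 1 → 0 ≤ τ i) ∧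
        (∀ i, 1 ≤ i → i ≤ m - 1 →
          (∑ j ∈ Finset.Icc 1 (i + 1), b j) - B ≤ ∑ j ∈ Finset.Icc 1 i, τ j) ∧
        (∀ i, 1 ≤ i → i ≤ m - 1 →
          ∑ j ∈ Finset.Icc 1 i, τ j ≤ ∑ j ∈ Finset.Icc 1 i, b j)})
    (hFne : F.Nonempty) :
    ∃ τ ∈ F, (∀ τ' ∈ F, ∑ j ∈ Finset.Icc 1 (m - 1), δ j * τ j
        ≤ ∑ j ∈ Finset.Icc 1 (m - 1), δ j * τ' j) ∧
      ∑ j ∈ Finset.Icc 1 (ℓ - 1), τ j = max ((∑ j ∈ Finset.Icc 1 ℓ, b j) - B) 0 ∧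
      ∑ j ∈ Finset.Icc 1 ℓ, τ j
        = min (∑ j ∈ Finset.Icc 1 ℓ, b j) ((∑ j ∈ Finset.Icc 1 m, b j) - B) := by
  obtain ⟨n, rfl⟩ : ∃ n, m = n + 1 := ⟨m - 1, by omega⟩
  simp only [Nat.add_sub_cancel] at hδ hℓmem hℓmin hF ⊢
  have hn1 : 1 ≤ n := by omega
  obtain ⟨hℓ1, hℓn⟩ := hℓmem
  -- basic facts about the b-prefix sums
  have hbnn : ∀ j, 1 ≤ j → j ≤ n + 1 → 0 ≤ b j := fun j h1 h2 => (hb j h1 h2).1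
  have hUmono : ∀ i i' : ℕ, i ≤ i' → i' ≤ n + 1 →
      (∑ j ∈ Finset.Icc 1 i, b j) ≤ ∑ j ∈ Finset.Icc 1 i', b j := by
    intro i i' h1 h2
    apply Finset.sum_le_sum_of_subset_of_nonneg (Finset.Icc_subset_Icc_right h1)
    intro j hj _
    rw [Finset.mem_Icc] at hj
    exact hbnn j hj.1 (le_trans hj.2 h2)
  have hUnn : ∀ i, i ≤ n + 1 → 0 ≤ ∑ j ∈ Finset.Icc 1 i, b j := by
    intro i hi
    apply Finset.sum_nonneg
    intro j hj
    rw [Finset.mem_Icc] at hj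
    exact hbnn j hj.1 (le_trans hj.2 hi)
  set SB : ℝ := (∑ j ∈ Finset.Icc 1 (n + 1), b j) - B with hSBdef
  set A : ℝ := max ((∑ j ∈ Finset.Icc 1 ℓ, b j) - B) 0 with hAdef
  set C : ℝ := min (∑ j ∈ Finset.Icc 1 ℓ, b j) SB with hCdef
  have hSBpos : 0 < SB := by rw [hSBdef]; linarith
  have hA0 : 0 ≤ A := le_max_right _ _
  have hAC : A ≤ C := by
    have h1 : 0 ≤ ∑ j ∈ Finset.Icc 1 ℓ, b j := hUnn ℓ (by omega)
    have h2 := hUmono ℓ (n + 1) (by omega) le_rfl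
    rw [hCdef]
    refine le_min (max_le (by linarith) h1) (max_le (by rw [hSBdef]; linarith) hSBpos.le)
  -- truncation
  set tr : (ℕ → ℝ) → ℕ → ℝ := fun x j => if 1 ≤ j ∧ j ≤ n then x j else 0 with htr
  have htrPS : ∀ (x : ℕ → ℝ) i, i ≤ n →
      ∑ j ∈ Finset.Icc 1 i, tr x j = ∑ j ∈ Finset.Icc 1 i, x j := by
    intro x i hi
    apply Finset.sum_congr rfl
    intro j hj
    rw [Finset.mem_Icc] at hj
    have hcond : 1 ≤ j ∧ j ≤ n := ⟨hj.1, le_trans hj.2 hi⟩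
    simp only [htr]
    rw [if_pos hcond]
  have htrcost : ∀ x : ℕ → ℝ,
      (∑ j ∈ Finset.Icc 1 n, δ j * tr x j) = ∑ j ∈ Finset.Icc 1 n, δ j * x j := by
    intro x
    apply Finset.sum_congr rfl
    intro j hj
    rw [Finset.mem_Icc] at hj
    simp only [htr]
    rw [if_pos hj]
  -- the compact box
  set H : ℝ := ∑ j ∈ Finset.Icc 1 n, b j with hH
  set Box : Set (ℕ → ℝ) :=
    Set.pi Set.univ (fun i => Set.Icc (0 : ℝ) (if 1 ≤ i ∧ i ≤ n then H else 0)) with hBox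
  have hBoxcomp : IsCompact Box := isCompact_univ_pi fun _ => isCompact_Icc
  have hFclosed : IsClosed F := by
    rw [hF]
    have heq : {τ : ℕ → ℝ | (∀ i, 1 ≤ i → i ≤ n → 0 ≤ τ i) ∧
        (∀ i, 1 ≤ i → i ≤ n →
          (∑ j ∈ Finset.Icc 1 (i + 1), b j) - B ≤ ∑ j ∈ Finset.Icc 1 i, τ j) ∧
        (∀ i, 1 ≤ i → i ≤ n →
          ∑ j ∈ Finset.Icc 1 i, τ j ≤ ∑ j ∈ Finset.Icc 1 i, b j)} =
        ⋂ i ∈ Finset.Icc 1 n, ({τ : ℕ → ℝ | 0 ≤ τ i} ∩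
          {τ : ℕ → ℝ | (∑ j ∈ Finset.Icc 1 (i + 1), b j) - B ≤ ∑ j ∈ Finset.Icc 1 i, τ j} ∩
          {τ : ℕ → ℝ | ∑ j ∈ Finset.Icc 1 i, τ j ≤ ∑ j ∈ Finset.Icc 1 i, b j}) := by
      ext τ
      simp only [Set.mem_setOf_eq, Set.mem_iInter, Set.mem_inter_iff, Finset.mem_Icc]
      constructor
      · rintro ⟨h1, h2, h3⟩ i ⟨a1, a2⟩
        exact ⟨⟨h1 i a1 a2, h2 i a1 a2⟩, h3 i a1 a2⟩
      · intro h
        exact ⟨fun i a1 a2 => (h i ⟨a1, a2⟩).1.1, fun i a1 a2 => (h i ⟨a1, a2⟩).1.2,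
          fun i a1 a2 => (h i ⟨a1, a2⟩).2⟩
    rw [heq]
    refine isClosed_biInter fun i _ => ?_
    have hc : Continuous fun τ : ℕ → ℝ => ∑ j ∈ Finset.Icc 1 i, τ j :=
      continuous_finset_sum _ fun j _ => continuous_apply j
    exact ((isClosed_le continuous_const (continuous_apply i)).inter
      (isClosed_le continuous_const hc)).inter (isClosed_le hc continuous_const)
  -- truncation of a feasible point lies in Box ∩ F
  have htrmem : ∀ x ∈ F, tr x ∈ Box ∩ F := by
    intro x hx
    rw [hF] at hx
    obtain ⟨hx1, hx2, hx3⟩ := hx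
    have hxPnn : ∀ i, i ≤ n → 0 ≤ ∑ j ∈ Finset.Icc 1 i, x j := by
      intro i hi
      apply Finset.sum_nonneg
      intro j hj
      rw [Finset.mem_Icc] at hj
      exact hx1 j hj.1 (le_trans hj.2 hi)
    constructor
    · intro i _
      by_cases hcase : 1 ≤ i ∧ i ≤ n
      · simp only [htr, if_pos hcase, Set.mem_Icc]
        refine ⟨hx1 i hcase.1 hcase.2, ?_⟩
        obtain ⟨k, rfl⟩ : ∃ k, i = k + 1 := ⟨i - 1, by omega⟩
        have hsplit := Finset.sum_Icc_succ_top (a := 1) (b := k) (by omega) x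
        have h1 : ∑ j ∈ Finset.Icc 1 (k + 1), x j ≤ ∑ j ∈ Finset.Icc 1 (k + 1), b j :=
          hx3 (k + 1) (by omega) hcase.2
        have h2 : 0 ≤ ∑ j ∈ Finset.Icc 1 k, x j := hxPnn k (by omega)
        have h3 : (∑ j ∈ Finset.Icc 1 (k + 1), b j) ≤ H :=
          hUmono (k + 1) n hcase.2 (by omega)
        linarith
      · simp only [htr, if_neg hcase, Set.mem_Icc]
        exact ⟨le_rfl, le_rfl⟩
    · rw [hF]
      refine ⟨?_, ?_, ?_⟩
      · intro i h1 h2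
        have hcond : 1 ≤ i ∧ i ≤ n := ⟨h1, h2⟩
        simp only [htr]
        rw [if_pos hcond]
        exact hx1 i h1 h2
      · intro i h1 h2
        rw [htrPS x i h2]
        exact hx2 i h1 h2
      · intro i h1 h2
        rw [htrPS x i h2]
        exact hx3 i h1 h2
  -- get a minimizer
  obtain ⟨τ0, hτ0⟩ := hFne
  have hKcomp : IsCompact (Box ∩ F) := hBoxcomp.inter_right hFclosed
  have hKne : (Box ∩ F).Nonempty := ⟨tr τ0, htrmem τ0 hτ0⟩
  have hcostcont : Continuous (fun x : ℕ → ℝ => ∑ j ∈ Finset.Icc 1 n, δ j * x j) :=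
    continuous_finset_sum _ fun j _ => continuous_const.mul (continuous_apply j)
  obtain ⟨y, hyK, hymin⟩ := hKcomp.exists_isMinOn hKne hcostcont.continuousOn
  have hyF : y ∈ F := hyK.2
  have hyopt : ∀ τ' ∈ F, (∑ j ∈ Finset.Icc 1 n, δ j * y j)
      ≤ ∑ j ∈ Finset.Icc 1 n, δ j * τ' j := by
    intro τ' hτ'
    have h := isMinOn_iff.mp hymin (tr τ') (htrmem τ' hτ')
    rwa [htrcost] at h
  -- prefix sums of y
  have hyFm := hyF
  rw [hF] at hyFm
  obtain ⟨hy1, hy2, hy3⟩ := hyFm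
  set S : ℕ → ℝ := fun i => ∑ j ∈ Finset.Icc 1 i, y j with hSdef
  have hS0 : S 0 = 0 := by simp [hSdef]
  have hSd : ∀ k, S (k + 1) = S k + y (k + 1) := by
    intro k
    simp only [hSdef]
    exact Finset.sum_Icc_succ_top (by omega) y
  have hSnn : ∀ i, i ≤ n → 0 ≤ S i := by
    intro i hi
    apply Finset.sum_nonneg
    intro j hj
    rw [Finset.mem_Icc] at hj
    exact hy1 j hj.1 (le_trans hj.2 hi)
  have hSmono : ∀ k, k + 1 ≤ n → S k ≤ S (k + 1) := by
    intro k hk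
    have := hy1 (k + 1) (by omega) hk
    rw [hSd k]; linarith
  have hSmono' : ∀ j, 1 ≤ j → j ≤ n → S (j - 1) ≤ S j := by
    intro j h1 h2
    have := hSmono (j - 1) (by omega)
    rwa [show j - 1 + 1 = j from by omega] at this
  have hyS : ∀ j, 1 ≤ j → y j = S j - S (j - 1) := by
    intro j h1
    have := hSd (j - 1)
    rw [show j - 1 + 1 = j from by omega] at this
    linarith
  have hSlow : ∀ i, 1 ≤ i → i ≤ n → (∑ j ∈ Finset.Icc 1 (i + 1), b j) - B ≤ S i := hy2
  have hShigh : ∀ i, 1 ≤ i → i ≤ n → S i ≤ ∑ j ∈ Finset.Icc 1 i, b j := hy3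
  -- the rebalanced prefix sums
  set g : ℕ → ℝ := fun i => if i < ℓ then min (S i) A else max (min (S i) SB) C with hgdef
  have hgA : ∀ i, i < ℓ → g i = min (S i) A := by
    intro i hi; simp only [hgdef, if_pos hi]
  have hgC : ∀ i, ℓ ≤ i → g i = max (min (S i) SB) C := by
    intro i hi; simp only [hgdef, if_neg (not_lt.2 hi)]
  have hg0 : g 0 = 0 := by
    rw [hgA 0 (by omega), hS0]
    exact min_eq_left hA0
  have hgmono : ∀ k, k + 1 ≤ n → g k ≤ g (k + 1) := by
    intro k hk
    by_cases h1 : k + 1 < ℓ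
    · rw [hgA k (by omega), hgA (k + 1) h1]
      exact min_le_min (hSmono k hk) le_rfl
    · by_cases h2 : ℓ ≤ k
      · rw [hgC k h2, hgC (k + 1) (by omega)]
        exact max_le_max (min_le_min (hSmono k hk) le_rfl) le_rfl
      · rw [hgA k (by omega), hgC (k + 1) (by omega)]
        calc min (S k) A ≤ A := min_le_right _ _
          _ ≤ C := hAC
          _ ≤ max (min (S (k + 1)) SB) C := le_max_right _ _
  -- the rebalanced charging plan
  set tb : ℕ → ℝ := fun j => if 1 ≤ j ∧ j ≤ n then g j - g (j - 1) else 0 with htb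
  have htbPS : ∀ i, i ≤ n → ∑ j ∈ Finset.Icc 1 i, tb j = g i := by
    intro i
    induction i with
    | zero => intro _; simp [hg0]
    | succ k ih =>
      intro h
      rw [Finset.sum_Icc_succ_top (by omega) tb, ih (by omega)]
      have hcond : 1 ≤ k + 1 ∧ k + 1 ≤ n := ⟨by omega, h⟩
      simp only [htb]
      rw [if_pos hcond]
      simp only [Nat.add_sub_cancel]
      ring
  have htbnn : ∀ j, 1 ≤ j → j ≤ n → 0 ≤ tb j := by
    intro j h1 h2
    have hcond : 1 ≤ j ∧ j ≤ n := ⟨h1, h2⟩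
    simp only [htb]
    rw [if_pos hcond]
    have := hgmono (j - 1) (by omega)
    rw [show j - 1 + 1 = j from by omega] at this
    linarith
  have hglow : ∀ i, 1 ≤ i → i ≤ n → (∑ j ∈ Finset.Icc 1 (i + 1), b j) - B ≤ g i := by
    intro i h1 h2
    by_cases hi : i < ℓ
    · rw [hgA i hi]
      refine le_min (hSlow i h1 h2) ?_
      have h3 := hUmono (i + 1) ℓ (by omega) (by omega)
      have h4 : (∑ j ∈ Finset.Icc 1 ℓ, b j) - B ≤ A := le_max_left _ _
      linarith
    · rw [hgC i (not_lt.1 hi)]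
      refine le_trans (le_min (hSlow i h1 h2) ?_) (le_max_left _ _)
      have h3 := hUmono (i + 1) (n + 1) (by omega) le_rfl
      rw [hSBdef]; linarith
  have hghigh : ∀ i, 1 ≤ i → i ≤ n → g i ≤ ∑ j ∈ Finset.Icc 1 i, b j := by
    intro i h1 h2
    by_cases hi : i < ℓ
    · rw [hgA i hi]
      exact le_trans (min_le_left _ _) (hShigh i h1 h2)
    · rw [hgC i (not_lt.1 hi)]
      refine max_le (le_trans (min_le_left _ _) (hShigh i h1 h2)) ?_
      have h3 : C ≤ ∑ j ∈ Finset.Icc 1 ℓ, b j := min_le_left _ _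
      have h4 := hUmono ℓ i (not_lt.1 hi) (by omega)
      linarith
  have htbF : tb ∈ F := by
    rw [hF]
    refine ⟨htbnn, ?_, ?_⟩
    · intro i h1 h2
      rw [htbPS i h2]
      exact hglow i h1 h2
    · intro i h1 h2
      rw [htbPS i h2]
      exact hghigh i h1 h2
  -- cost comparison
  have hgn : g n = SB := by
    rw [hgC n hℓn]
    have h1 : min (S n) SB = SB := min_eq_right (hSlow n hn1 le_rfl)
    rw [h1]
    exact max_eq_left (min_le_right _ _)
  have hgnS : g n ≤ S n := by
    rw [hgn]
    exact hSlow n hn1 le_rfl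
  have htbley : ∀ j, 1 ≤ j → j ≤ n → j ≠ ℓ → tb j ≤ y j := by
    intro j h1 h2 hne
    have hcond : 1 ≤ j ∧ j ≤ n := ⟨h1, h2⟩
    simp only [htb]
    rw [if_pos hcond, hyS j h1]
    rcases lt_or_gt_of_ne hne with hlt | hgt
    · rw [hgA j hlt, hgA (j - 1) (by omega)]
      exact lipMin (hSmono' j h1 h2)
    · rw [hgC j (by omega), hgC (j - 1) (by omega)]
      have ha : min (S (j - 1)) SB ≤ min (S j) SB := min_le_min (hSmono' j h1 h2) le_rfl
      have hb1 := lipMax (c := C) ha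
      have hb2 := lipMin (c := SB) (hSmono' j h1 h2)
      linarith
  have hkey : (∑ j ∈ Finset.Icc 1 n, δ j * tb j) ≤ ∑ j ∈ Finset.Icc 1 n, δ j * y j := by
    have hsum1 : ∑ j ∈ Finset.Icc 1 n, (tb j - y j) = g n - S n := by
      rw [Finset.sum_sub_distrib, htbPS n le_rfl]
    have hsum2 : ∑ j ∈ Finset.Icc 1 n, (δ j - δ ℓ) * (tb j - y j) ≤ 0 := by
      apply Finset.sum_nonpos
      intro j hj
      rw [Finset.mem_Icc] at hj
      rcases eq_or_ne j ℓ with rfl | hne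
      · simp
      · have h1 : δ ℓ ≤ δ j := hℓmin j hj.1 hj.2
        have h2 : tb j ≤ y j := htbley j hj.1 hj.2 hne
        exact mul_nonpos_of_nonneg_of_nonpos (by linarith) (by linarith)
    have hexp : (∑ j ∈ Finset.Icc 1 n, δ j * tb j) - ∑ j ∈ Finset.Icc 1 n, δ j * y j
        = (∑ j ∈ Finset.Icc 1 n, (δ j - δ ℓ) * (tb j - y j)) + δ ℓ * (g n - S n) := by
      rw [← hsum1, Finset.mul_sum, ← Finset.sum_sub_distrib, ← Finset.sum_add_distrib]
      exact Finset.sum_congr rfl fun j _ => by ring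
    have hδℓ : 0 < δ ℓ := hδ ℓ hℓ1 hℓn
    have hlast : δ ℓ * (g n - S n) ≤ 0 :=
      mul_nonpos_of_nonneg_of_nonpos hδℓ.le (by linarith)
    linarith
  -- conclusion
  refine ⟨tb, htbF, fun τ' hτ' => le_trans hkey (hyopt τ' hτ'), ?_, ?_⟩
  · have hl1 : ℓ - 1 ≤ n := by omega
    rw [htbPS (ℓ - 1) hl1, hgA (ℓ - 1) (by omega)]
    apply min_eq_right
    refine max_le ?_ (hSnn (ℓ - 1) hl1)
    rcases eq_or_lt_of_le hℓ1 with h | h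
    · rw [← h]
      simp only [Nat.sub_self, hS0]
      have := (hb 1 le_rfl (by omega)).2
      simp only [Finset.Icc_self, Finset.sum_singleton]
      linarith
    · have := hSlow (ℓ - 1) (by omega) hl1
      rwa [show ℓ - 1 + 1 = ℓ from by omega] at this
  · rw [htbPS ℓ hℓn, hgC ℓ le_rfl]
    apply max_eq_right
    rw [hCdef]
    exact min_le_min (hShigh ℓ hℓ1 hℓn) le_rfl
end
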